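/- For every four-qubit array v : Fin 2 → Fin 2 → Fin 2 → Fin 2 → ℝ and all invertible 2×2 real matrices g₁, g₂, g₃, g₄, the intersection invariant is unchanged under the action: ñ₁₉(g·v) = ñ₁₉(v). -/

import Mathlib

/-- Solution space of the four simultaneous contraction conditions defining
the intersection invariant `ñ₁₉` of four qubits. -/
def S₁₉ (v : Fin 2 → Fin 2 → Fin 2 → Fin 2 → ℝ) :
    Submodule ℝ (Fin 2 → Fin 2 → Fin 2 → Fin 2 → ℝ) where
  carrier := { w |
    (∀ j₁ k₁, ∑ j₂, ∑ j₃, ∑ j₄, v j₁ j₂ j₃ j₄ * w k₁ j₂ j₃ j₄ = 0) ∧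
    (∀ j₂ k₂, ∑ j₁, ∑ j₃, ∑ j₄, v j₁ j₂ j₃ j₄ * w j₁ k₂ j₃ j₄ = 0) ∧
    (∀ j₃ k₃, ∑ j₁, ∑ j₂, ∑ j₄, v j₁ j₂ j₃ j₄ * w j₁ j₂ k₃ j₄ = 0) ∧
    (∀ j₄ k₄, ∑ j₁, ∑ j₂, ∑ j₃, v j₁ j₂ j₃ j₄ * w j₁ j₂ j₃ k₄ = 0) }
  zero_mem' := by
    refine ⟨?_, ?_, ?_, ?_⟩ <;> intro a b <;> simp
  add_mem' := by
    rintro a b ⟨ha1, ha2, ha3, ha4⟩ ⟨hb1, hb2, hb3, hb4⟩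
    refine ⟨fun p q => ?_, fun p q => ?_, fun p q => ?_, fun p q => ?_⟩ <;>
      simp only [Pi.add_apply, mul_add, Finset.sum_add_distrib]
    · rw [ha1 p q, hb1 p q, add_zero]
    · rw [ha2 p q, hb2 p q, add_zero]
    · rw [ha3 p q, hb3 p q, add_zero]
    · rw [ha4 p q, hb4 p q, add_zero]
  smul_mem' := by
    rintro c a ⟨ha1, ha2, ha3, ha4⟩
    have hc : ∀ x y : ℝ, x * (c * y) = c * (x * y) := fun x y => mul_left_comm x c y
    refine ⟨fun p q => ?_, fun p q => ?_, fun p q => ?_, fun p q => ?_⟩ <;>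
      simp only [Pi.smul_apply, smul_eq_mul, hc, ← Finset.mul_sum]
    · rw [ha1 p q, mul_zero]
    · rw [ha2 p q, mul_zero]
    · rw [ha3 p q, mul_zero]
    · rw [ha4 p q, mul_zero]

/-- `ñ₁₉(v)`: the dimension of `S₁₉ v`. -/
noncomputable def n₁₉ (v : Fin 2 → Fin 2 → Fin 2 → Fin 2 → ℝ) : ℕ :=
  Module.finrank ℝ (S₁₉ v)

/-- Action of a quadruple of matrices on a four-qubit coordinate array:
`(g·v) j₁ j₂ j₃ j₄ = ∑ k₁ k₂ k₃ k₄,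
  v k₁ k₂ k₃ k₄ * g₁ k₁ j₁ * g₂ k₂ j₂ * g₃ k₃ j₃ * g₄ k₄ j₄`. -/
def act₄ (g₁ g₂ g₃ g₄ : Matrix (Fin 2) (Fin 2) ℝ)
    (v : Fin 2 → Fin 2 → Fin 2 → Fin 2 → ℝ) :
    Fin 2 → Fin 2 → Fin 2 → Fin 2 → ℝ :=
  fun j₁ j₂ j₃ j₄ => ∑ k₁, ∑ k₂, ∑ k₃, ∑ k₄,
    v k₁ k₂ k₃ k₄ * g₁ k₁ j₁ * g₂ k₂ j₂ * g₃ k₃ j₃ * g₄ k₄ j₄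

/-! If `v` is transformed by `g` and `w` by `(g⁻¹)ᵀ`, contracting `v` with `w` over a mode is
unchanged because `g * g⁻¹ = 1`, while the `2 × 2` matrix `C` of a free mode becomes
`gᵀ * C * (g⁻¹)ᵀ`. Hence `w ↦ (g⁻¹)ᵀ · w` maps `S₁₉ v` injectively into `S₁₉ (g · v)`, and the
same with `g⁻¹` in place of `g` gives the reverse inequality of dimensions. Since the four
conditions are permuted cyclically by rotating the modes, only matrices acting on the first
mode need to be treated. -/

open Matrix Finset

theorem Matrix.vecMul_dotProduct_vecMul_of_mul_transpose_eq_one {R n : Type*} [CommSemiring R]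
    [Fintype n] [DecidableEq n] {p q : Matrix n n R} (h : p * qᵀ = 1) (x y : n → R) :
    (x ᵥ* p) ⬝ᵥ (y ᵥ* q) = x ⬝ᵥ y := by
  rw [← mulVec_transpose q y, ← dotProduct_mulVec, mulVec_mulVec, h, one_mulVec]

section Contraction

variable {R n m₁ m₂ m₃ : Type*} [CommSemiring R] [Fintype n] [Fintype m₁] [Fintype m₂]
  [Fintype m₃]

theorem sum_vecMul_mul_vecMul_of_mul_transpose_eq_one [DecidableEq n] {p q : Matrix n n R}
    (h : p * qᵀ = 1) (X Y : n → m₁ → m₂ → R) :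
    ∑ j, ∑ s, ∑ t, (∑ a, X a s t * p a j) * (∑ b, Y b s t * q b j)
      = ∑ j, ∑ s, ∑ t, X j s t * Y j s t := by
  rw [← sum_comm_cycle]
  conv_rhs => rw [← sum_comm_cycle]
  exact sum_congr rfl fun s _ => sum_congr rfl fun t _ =>
    vecMul_dotProduct_vecMul_of_mul_transpose_eq_one h (X · s t) (Y · s t)

theorem sum_vecMul_mul_vecMul (p q : Matrix n n R) (X Y : n → m₁ → m₂ → m₃ → R) (j k : n) :
    ∑ s, ∑ t, ∑ u, (∑ a, X a s t u * p a j) * (∑ b, Y b s t u * q b k)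
      = ∑ a, ∑ b, p a j * q b k * ∑ s, ∑ t, ∑ u, X a s t u * Y b s t u := by
  simp only [sum_mul, mul_sum]
  simp only [sum_comm (s := (univ : Finset m₃)) (t := (univ : Finset n)),
    sum_comm (s := (univ : Finset m₂)) (t := (univ : Finset n)),
    sum_comm (s := (univ : Finset m₁)) (t := (univ : Finset n))]
  rw [sum_comm]
  exact sum_congr rfl fun _ _ => sum_congr rfl fun _ _ => sum_congr rfl fun _ _ =>
    sum_congr rfl fun _ _ => sum_congr rfl fun _ _ => by ring

end Contraction

abbrev FourQubitArray := Fin 2 → Fin 2 → Fin 2 → Fin 2 → ℝ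

def actFirst (p : Matrix (Fin 2) (Fin 2) ℝ) (v : FourQubitArray) : FourQubitArray :=
  fun j₁ j₂ j₃ j₄ => ∑ a, v a j₂ j₃ j₄ * p a j₁

def rotate (v : FourQubitArray) : FourQubitArray :=
  fun j₁ j₂ j₃ j₄ => v j₂ j₃ j₄ j₁

theorem actFirst_mem_S₁₉ {p q : Matrix (Fin 2) (Fin 2) ℝ} (h : p * qᵀ = 1)
    {v w : FourQubitArray} (hw : w ∈ S₁₉ v) : actFirst q w ∈ S₁₉ (actFirst p v) := by
  obtain ⟨h₁, h₂, h₃, h₄⟩ := hw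
  refine ⟨fun j k => ?_, fun j k => ?_, fun j k => ?_, fun j k => ?_⟩
  · exact (sum_vecMul_mul_vecMul p q v w j k).trans (by simp only [h₁, mul_zero, sum_const_zero])
  · exact (sum_vecMul_mul_vecMul_of_mul_transpose_eq_one h (fun a s t => v a j s t)
      (fun b s t => w b k s t)).trans (h₂ j k)
  · exact (sum_vecMul_mul_vecMul_of_mul_transpose_eq_one h (fun a s t => v a s j t)
      (fun b s t => w b s k t)).trans (h₃ j k)
  · exact (sum_vecMul_mul_vecMul_of_mul_transpose_eq_one h (fun a s t => v a s t j)
      (fun b s t => w b s t k)).trans (h₄ j k)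

theorem rotate_mem_S₁₉ {v w : FourQubitArray} (hw : w ∈ S₁₉ v) : rotate w ∈ S₁₉ (rotate v) := by
  obtain ⟨h₁, h₂, h₃, h₄⟩ := hw
  exact ⟨h₄, fun j k => sum_comm_cycle.symm.trans (h₁ j k),
    fun j k => sum_comm_cycle.symm.trans (h₂ j k), fun j k => sum_comm_cycle.symm.trans (h₃ j k)⟩

theorem act₄_eq_rotate_actFirst (g₁ g₂ g₃ g₄ : Matrix (Fin 2) (Fin 2) ℝ) (v : FourQubitArray) :
    act₄ g₁ g₂ g₃ g₄ v = rotate (actFirst g₂ (rotate (actFirst g₃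
      (rotate (actFirst g₄ (rotate (actFirst g₁ v))))))) := by
  funext j₁ j₂ j₃ j₄
  simp only [act₄, actFirst, rotate, Fin.sum_univ_two]
  ring

theorem act₄_mem_S₁₉ {p₁ p₂ p₃ p₄ q₁ q₂ q₃ q₄ : Matrix (Fin 2) (Fin 2) ℝ}
    (h₁ : p₁ * q₁ᵀ = 1) (h₂ : p₂ * q₂ᵀ = 1) (h₃ : p₃ * q₃ᵀ = 1) (h₄ : p₄ * q₄ᵀ = 1)
    {v w : FourQubitArray} (hw : w ∈ S₁₉ v) :
    act₄ q₁ q₂ q₃ q₄ w ∈ S₁₉ (act₄ p₁ p₂ p₃ p₄ v) := by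
  rw [act₄_eq_rotate_actFirst, act₄_eq_rotate_actFirst]
  exact rotate_mem_S₁₉ <| actFirst_mem_S₁₉ h₂ <| rotate_mem_S₁₉ <| actFirst_mem_S₁₉ h₃ <|
    rotate_mem_S₁₉ <| actFirst_mem_S₁₉ h₄ <| rotate_mem_S₁₉ <| actFirst_mem_S₁₉ h₁ hw

theorem act₄_act₄ (a₁ a₂ a₃ a₄ b₁ b₂ b₃ b₄ : Matrix (Fin 2) (Fin 2) ℝ) (v : FourQubitArray) :
    act₄ a₁ a₂ a₃ a₄ (act₄ b₁ b₂ b₃ b₄ v) = act₄ (b₁ * a₁) (b₂ * a₂) (b₃ * a₃) (b₄ * a₄) v := by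
  funext j₁ j₂ j₃ j₄
  simp only [act₄, mul_apply, Fin.sum_univ_two]
  ring

theorem act₄_one (v : FourQubitArray) : act₄ 1 1 1 1 v = v := by
  funext j₁ j₂ j₃ j₄
  simp [act₄, one_apply]

def act₄ₗ (p₁ p₂ p₃ p₄ : Matrix (Fin 2) (Fin 2) ℝ) : FourQubitArray →ₗ[ℝ] FourQubitArray where
  toFun := act₄ p₁ p₂ p₃ p₄
  map_add' v w := by
    funext j₁ j₂ j₃ j₄
    simp only [act₄, Pi.add_apply, add_mul, sum_add_distrib]
  map_smul' c v := by
    funext j₁ j₂ j₃ j₄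
    simp only [act₄, Pi.smul_apply, smul_eq_mul, mul_assoc, mul_sum, RingHom.id_apply]

theorem n₁₉_le_n₁₉_act₄ (v : FourQubitArray) (g₁ g₂ g₃ g₄ : GL (Fin 2) ℝ) :
    n₁₉ v ≤ n₁₉ (act₄ g₁ g₂ g₃ g₄ v) := by
  have hg (g : GL (Fin 2) ℝ) : (g : Matrix (Fin 2) (Fin 2) ℝ) * (↑g⁻¹ : Matrix _ _ ℝ)ᵀᵀ = 1 := by
    rw [transpose_transpose, Units.mul_inv]
  have hgT (g : GL (Fin 2) ℝ) : (↑g⁻¹ : Matrix (Fin 2) (Fin 2) ℝ)ᵀ * (g : Matrix _ _ ℝ)ᵀ = 1 := by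
    rw [← transpose_mul, Units.mul_inv, transpose_one]
  let f := (act₄ₗ (↑g₁⁻¹)ᵀ (↑g₂⁻¹)ᵀ (↑g₃⁻¹)ᵀ (↑g₄⁻¹)ᵀ).restrict (p := S₁₉ v)
    (q := S₁₉ (act₄ g₁ g₂ g₃ g₄ v)) fun w hw => act₄_mem_S₁₉ (hg g₁) (hg g₂) (hg g₃) (hg g₄) hw
  have hinj : Function.Injective (act₄ (↑g₁⁻¹)ᵀ (↑g₂⁻¹)ᵀ (↑g₃⁻¹)ᵀ (↑g₄⁻¹)ᵀ) :=
    Function.LeftInverse.injective (g := act₄ (↑g₁)ᵀ (↑g₂)ᵀ (↑g₃)ᵀ (↑g₄)ᵀ) fun w => by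
      rw [act₄_act₄, hgT, hgT, hgT, hgT, act₄_one]
  exact LinearMap.finrank_le_finrank_of_injective (f := f) fun x y hxy =>
    Subtype.ext (hinj (congrArg Subtype.val hxy))

/-- **Invariance of the four-qubit intersection invariant `ñ₁₉`.**
For every four-qubit array `v` and invertible `2×2` real matrices
`g₁, g₂, g₃, g₄`, one has `ñ₁₉(g·v) = ñ₁₉(v)`. -/
theorem four_qubit_n19_invariant
    (v : Fin 2 → Fin 2 → Fin 2 → Fin 2 → ℝ)
    (g₁ g₂ g₃ g₄ : Matrix.GeneralLinearGroup (Fin 2) ℝ) :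
    n₁₉ (act₄ (g₁ : Matrix (Fin 2) (Fin 2) ℝ) (g₂ : Matrix (Fin 2) (Fin 2) ℝ)
      (g₃ : Matrix (Fin 2) (Fin 2) ℝ) (g₄ : Matrix (Fin 2) (Fin 2) ℝ) v)
      = n₁₉ v := by
  refine le_antisymm ?_ (n₁₉_le_n₁₉_act₄ v g₁ g₂ g₃ g₄)
  simpa only [act₄_act₄, Units.mul_inv, act₄_one] using
    n₁₉_le_n₁₉_act₄ (act₄ g₁ g₂ g₃ g₄ v) g₁⁻¹ g₂⁻¹ g₃⁻¹ g₄⁻¹
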